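/- R_p = 𝔐_p ∩ R: a covariant event E ∈ R satisfies (P_∞^c ⊆ E or P_∞^c ⊆ Ω \ E) if and only if E belongs to the σ-algebra 𝔐_p generated by the doubly principal cylinder sets. -/

import Mathlib

open MeasurableSpace MeasureTheory Set

/-- An (infinite) causal set: an irreflexive, transitive relation on ℕ
satisfying the natural-labeling condition `x ≺ y → x < y`.  The type of all
such causets plays the role of Ω. -/
structure Causet where
  rel : ℕ → ℕ → Prop
  irrefl : ∀ x, ¬ rel x x
  trans : ∀ x y z, rel x y → rel y z → rel x z
  lt_of_rel : ∀ x y, rel x y → x < y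

/-- A finite causet on ground-set `{0, …, n-1}` with natural labeling. -/
structure FinCauset (n : ℕ) where
  rel : ℕ → ℕ → Prop
  bounded : ∀ x y, rel x y → x < n ∧ y < n
  irrefl : ∀ x, ¬ rel x x
  trans : ∀ x y z, rel x y → rel y z → rel x z
  lt_of_rel : ∀ x y, rel x y → x < y

/-- The cylinder set of a finite causet `C` on `{0,…,n-1}`: all causets whose
restriction to `{0,…,n-1}` equals `C`. -/
def cyl {n : ℕ} (C : FinCauset n) : Set Causet :=
  { D | ∀ x y, x < n → y < n → (D.rel x y ↔ C.rel x y) }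

/-- The σ-algebra 𝔐 generated by all cylinder sets. -/
def cylAlgebra : MeasurableSpace Causet :=
  .generateFrom { E | ∃ n, 0 < n ∧ ∃ C : FinCauset n, E = cyl C }

/-- Order isomorphism between two (infinite) causets. -/
def Iso (C D : Causet) : Prop :=
  ∃ f : ℕ ≃ ℕ, ∀ x y, C.rel x y ↔ D.rel (f x) (f y)

/-- A set of causets is covariant if it is closed under order isomorphism. -/
def CovariantEvent (E : Set Causet) : Prop :=
  ∀ C D : Causet, Iso C D → C ∈ E → D ∈ E

/-- Membership in the σ-algebra R of covariant events: measurable w.r.t. 𝔐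
and closed under order isomorphism. -/
def MemR (E : Set Causet) : Prop :=
  MeasurableSet[cylAlgebra] E ∧ CovariantEvent E

/-- A stem of a causet: a finite down-set. -/
def IsStem (D : Causet) (A : Set ℕ) : Prop :=
  A.Finite ∧ ∀ x y, y ∈ A → D.rel x y → x ∈ A

/-- The stem-set of (the order of) the finite causet `C`: all causets
containing a stem order-isomorphic to `C`. -/
def stemSet {n : ℕ} (C : FinCauset n) : Set Causet :=
  { D | ∃ A : Set ℕ, IsStem D A ∧
      ∃ f : {x : ℕ // x < n} ≃ A,
        ∀ x y : {x : ℕ // x < n}, C.rel x.1 y.1 ↔ D.rel (f x).1 (f y).1 }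

/-- The collection S of all stem-sets. -/
def stemSets : Set (Set Causet) :=
  { E | ∃ n, 0 < n ∧ ∃ C : FinCauset n, E = stemSet C }

/-- The σ-algebra R(S) generated by the stem-sets. -/
def stemAlgebra : MeasurableSpace Causet := .generateFrom stemSets

/-- A rogue: a causet `U` for which there is a non-isomorphic causet `V`
belonging to exactly the same stem-sets. -/
def IsRogue (U : Causet) : Prop :=
  ∃ V : Causet, ¬ Iso U V ∧
    ∀ (n : ℕ) (C : FinCauset n), 0 < n → (V ∈ stemSet C ↔ U ∈ stemSet C)

/-- Θ: the set of rogues. -/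
def Theta : Set Causet := { U | IsRogue U }

/-- `A` is the past of a break of `D`: `(A, Aᶜ)` is a partition into nonempty
parts with every element of `A` below every element of `Aᶜ`. -/
def IsBreakPast (D : Causet) (A : Set ℕ) : Prop :=
  A.Nonempty ∧ Aᶜ.Nonempty ∧ ∀ a ∈ A, ∀ b ∈ Aᶜ, D.rel a b

/-- B_∞: the set of causets with infinitely many breaks. -/
def Binf : Set Causet := { D | { A : Set ℕ | IsBreakPast D A }.Infinite }

/-- `x` is a maximal element of the restriction of the finite causet `C`
to the elements `< k`. -/
def FMaximalBelow {n : ℕ} (C : FinCauset n) (k x : ℕ) : Prop :=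
  x < k ∧ ∀ y, y < k → ¬ C.rel x y

/-- A principal finite causet: it has a unique maximal element. -/
def Principal {n : ℕ} (C : FinCauset n) : Prop :=
  ∃! x, FMaximalBelow C n x

/-- 𝔐_b: the σ-algebra generated by the principal cylinder sets. -/
def principalCylAlgebra : MeasurableSpace Causet :=
  .generateFrom { E | ∃ n, ∃ C : FinCauset n, Principal C ∧ E = cyl C }

/-- Membership in R_b: covariant events containing all or none of the
causets with finitely many breaks. -/
def MemRb (E : Set Causet) : Prop :=
  MemR E ∧ (Binfᶜ ⊆ E ∨ Binfᶜ ⊆ Eᶜ)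

/-- `x` is a maximal element of the restriction of the causet `D` to `{0,…,n}`. -/
def RMaximal (D : Causet) (n x : ℕ) : Prop :=
  x ≤ n ∧ ∀ y, y ≤ n → ¬ D.rel x y

/-- 𝔉: causets all but finitely many of whose initial-segment restrictions
have at least two maximal elements. -/
def Ffin : Set Causet :=
  { D | ∃ m : ℕ, ∀ n, m < n →
      ∃ x y, x ≠ y ∧ RMaximal D n x ∧ RMaximal D n y }

/-- The restriction of the m-causet `D` to `{0,…,n-1}` equals the n-causet `C`. -/
def RestrEq {m n : ℕ} (D : FinCauset m) (C : FinCauset n) : Prop :=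
  ∀ x y, x < n → y < n → (D.rel x y ↔ C.rel x y)

/-- Γ_{C}: the causets containing `C` as a stem but containing no principal
causet of larger cardinality as a stem (i.e. `cyl C` minus the cylinder sets
of the principal causets extending `C`). -/
def Gamma {n : ℕ} (C : FinCauset n) : Set Causet :=
  cyl C \ { X | ∃ m, n < m ∧ ∃ D : FinCauset m, Principal D ∧ RestrEq D C ∧ X ∈ cyl D }

/-- Ŝ: the collection of principal stem-sets. -/
def principalStemSets : Set (Set Causet) :=
  { E | ∃ n, ∃ C : FinCauset n, Principal C ∧ E = stemSet C }

/-- R(Ŝ): the σ-algebra generated by the principal stem-sets. -/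
def principalStemAlgebra : MeasurableSpace Causet := .generateFrom principalStemSets

/-- `x` is a post of `D`: every other element is related to `x`. -/
def IsPost (D : Causet) (x : ℕ) : Prop :=
  ∀ y, y ≠ x → D.rel y x ∨ D.rel x y

/-- P_∞: the set of causets with infinitely many posts. -/
def Pinf : Set Causet := { D | { x | IsPost D x }.Infinite }

/-- A doubly principal finite causet: both it and its restriction to
`{0,…,n-2}` have a unique maximal element. -/
def DoublyPrincipal {n : ℕ} (C : FinCauset n) : Prop :=
  Principal C ∧ ∃! x, FMaximalBelow C (n - 1) x

/-- 𝔐_p: the σ-algebra generated by the doubly principal cylinder sets. -/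
def doublyPrincipalCylAlgebra : MeasurableSpace Causet :=
  .generateFrom { E | ∃ n, ∃ C : FinCauset n, DoublyPrincipal C ∧ E = cyl C }

/-- The σ-algebra generated by the doubly principal stem-sets. -/
def doublyPrincipalStemAlgebra : MeasurableSpace Causet :=
  .generateFrom { E | ∃ n, ∃ C : FinCauset n, DoublyPrincipal C ∧ E = stemSet C }


/-!
Every post `p` of a causet makes its restriction to `{0, …, p + 1}` doubly principal. Hence on
`P_∞` every cylinder is a countable union of doubly principal cylinders, and whether `x` is a post
can be read off the doubly principal restrictions; so `P_∞ ∈ 𝔐_p` and the trace of `𝔐` on `P_∞`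
lies in `𝔐_p`, which gives one direction.

Conversely, a restriction `{0, …, n - 1}` is doubly principal exactly when the labels `n - 2` and
`n - 1` are each above all smaller labels. A causet with finitely many posts can be relabelled
greedily, never creating such a top label when another choice is available; beyond the last post
no two consecutive labels are then tops. An `𝔐_p` event cannot tell such a causet from its
finite part below that point extended by isolated elements, and moving one isolated element to
label `0` gives an isomorphic causet with no doubly principal restriction at all. All such
causets lie in no doubly principal cylinder, so a covariant `𝔐_p` event contains all or none of
`P_∞ᶜ`.
-/

namespace FinCauset

variable {n : ℕ}

lemma ext {C C' : FinCauset n} (h : ∀ x y, x < n → y < n → (C.rel x y ↔ C'.rel x y)) :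
    C = C' := by
  have hrel : C.rel = C'.rel := by
    ext x y
    by_cases hxy : x < n ∧ y < n
    · exact h x y hxy.1 hxy.2
    · exact iff_of_false (fun h' => hxy (C.bounded x y h')) (fun h' => hxy (C'.bounded x y h'))
  cases C
  cases C'
  congr

instance : Finite (FinCauset n) :=
  Finite.of_injective (fun C (x y : Fin n) => C.rel x y) fun C C' h =>
    ext fun x y hx hy => by simpa using congrFun (congrFun h ⟨x, hx⟩) ⟨y, hy⟩

lemma existsUnique_fMaximalBelow_succ_iff (C : FinCauset n) (k : ℕ) :
    (∃! x, FMaximalBelow C (k + 1) x) ↔ ∀ y < k, C.rel y k := by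
  have hk : FMaximalBelow C (k + 1) k :=
    ⟨k.lt_succ_self, fun y hy h => by have := C.lt_of_rel _ _ h; omega⟩
  constructor
  · rintro ⟨x, -, huniq⟩ y hy
    classical
    -- the largest label `z ≤ k` weakly above `y` is maximal, hence equal to `k`
    obtain ⟨z, hz_def⟩ : ∃ z, z = Nat.findGreatest (fun w => y = w ∨ C.rel y w) k := ⟨_, rfl⟩
    have hz : y = z ∨ C.rel y z :=
      hz_def ▸ Nat.findGreatest_spec (P := fun w => y = w ∨ C.rel y w) hy.le (Or.inl rfl)
    have hz_max : FMaximalBelow C (k + 1) z := by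
      refine ⟨Nat.lt_succ_of_le (hz_def ▸ Nat.findGreatest_le k), fun w hw hzw => ?_⟩
      refine Nat.findGreatest_is_greatest (hz_def ▸ C.lt_of_rel _ _ hzw) (by omega) ?_
      rcases hz with rfl | hz
      · exact Or.inr hzw
      · exact Or.inr (C.trans _ _ _ hz hzw)
    obtain rfl : z = k := (huniq z hz_max).trans (huniq k hk).symm
    exact hz.resolve_left hy.ne
  · intro h
    refine ⟨k, hk, fun x hx => ?_⟩
    by_contra hne
    exact hx.2 k k.lt_succ_self (h x (by have := hx.1; omega))

lemma doublyPrincipal_iff (C : FinCauset n) :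
    DoublyPrincipal C ↔
      ∃ k, n = k + 2 ∧ (∀ y < k + 1, C.rel y (k + 1)) ∧ ∀ y < k, C.rel y k := by
  rcases n with _ | _ | k
  · simp [DoublyPrincipal, Principal, FMaximalBelow]
  · simp [DoublyPrincipal, FMaximalBelow]
  · simp only [DoublyPrincipal, Principal, Nat.add_sub_cancel, existsUnique_fMaximalBelow_succ_iff,
      Nat.add_right_cancel_iff, exists_eq_left']

/-- The causet on `ℕ` obtained by adding isolated elements `n, n+1, …` to `C`. -/
def toCauset (C : FinCauset n) : Causet :=
  ⟨C.rel, C.irrefl, C.trans, C.lt_of_rel⟩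

/-- `C` relabelled by `x ↦ x + 1`, with `0, n+1, n+2, …` isolated. -/
def shiftCauset (C : FinCauset n) : Causet where
  rel a b := 0 < a ∧ C.rel (a - 1) (b - 1)
  irrefl x h := C.irrefl _ h.2
  trans x y z h h' := ⟨h.1, C.trans _ _ _ h.2 h'.2⟩
  lt_of_rel x y h := by have := C.lt_of_rel _ _ h.2; omega

end FinCauset

namespace Causet

def restrict (D : Causet) (n : ℕ) : FinCauset n where
  rel x y := x < n ∧ y < n ∧ D.rel x y
  bounded _ _ h := ⟨h.1, h.2.1⟩
  irrefl x h := D.irrefl x h.2.2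
  trans x y z h h' := ⟨h.1, h'.2.1, D.trans x y z h.2.2 h'.2.2⟩
  lt_of_rel x y h := D.lt_of_rel x y h.2.2

@[simp]
lemma restrict_rel {D : Causet} {n x y : ℕ} : (D.restrict n).rel x y ↔ x < n ∧ y < n ∧ D.rel x y :=
  Iff.rfl

def IsTopLabel (D : Causet) (k : ℕ) : Prop :=
  ∀ y < k, D.rel y k

lemma doublyPrincipal_restrict_iff (D : Causet) (n : ℕ) :
    DoublyPrincipal (D.restrict n) ↔ ∃ k, n = k + 2 ∧ D.IsTopLabel (k + 1) ∧ D.IsTopLabel k := by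
  rw [FinCauset.doublyPrincipal_iff]
  refine exists_congr fun k => and_congr_right fun hn => ?_
  subst hn
  refine and_congr (forall₂_congr fun y hy => ?_) (forall₂_congr fun y hy => ?_) <;>
    exact ⟨fun h => h.2.2, fun h => ⟨by omega, by omega, h⟩⟩

end Causet

lemma mem_cyl_iff_restrict_eq {n : ℕ} {C : FinCauset n} {D : Causet} :
    D ∈ cyl C ↔ D.restrict n = C := by
  refine ⟨fun h => FinCauset.ext fun x y hx hy => ?_, fun h x y hx hy => ?_⟩
  · simpa [hx, hy] using h x y hx hy
  · simp [← h, hx, hy]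

lemma mem_cyl_iff_restrEq_restrict {n m : ℕ} {C : FinCauset n} {D : Causet} (h : n ≤ m) :
    D ∈ cyl C ↔ RestrEq (D.restrict m) C :=
  forall₄_congr fun x y hx hy => by simp [show x < m by omega, show y < m by omega]

lemma IsPost.rel_of_lt {D : Causet} {x y : ℕ} (h : IsPost D x) (hy : y < x) : D.rel y x :=
  (h y hy.ne).resolve_right fun h' => (D.lt_of_rel _ _ h').not_gt hy

lemma IsPost.rel_of_gt {D : Causet} {x y : ℕ} (h : IsPost D x) (hy : x < y) : D.rel x y :=
  (h y hy.ne').resolve_left fun h' => (D.lt_of_rel _ _ h').not_gt hy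

lemma IsPost.doublyPrincipal_restrict {D : Causet} {p : ℕ} (h : IsPost D p) :
    DoublyPrincipal (D.restrict (p + 2)) := by
  have hp : D.rel p (p + 1) := h.rel_of_gt p.lt_succ_self
  refine (D.doublyPrincipal_restrict_iff _).2 ⟨p, rfl, fun y hy => ?_, fun y hy => h.rel_of_lt hy⟩
  rcases Nat.lt_succ_iff_lt_or_eq.1 hy with hy | rfl
  · exact D.trans _ _ _ (h.rel_of_lt hy) hp
  · exact hp

def FinCauset.IsPost {n : ℕ} (C : FinCauset n) (x : ℕ) : Prop :=
  x < n ∧ ∀ y < n, y ≠ x → C.rel y x ∨ C.rel x y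

lemma mem_Pinf_iff_exists_isPost {D : Causet} : D ∈ Pinf ↔ ∀ N, ∃ x, N < x ∧ IsPost D x :=
  ⟨fun h N => (h.exists_gt N).imp fun _ hx => ⟨hx.2, hx.1⟩,
    fun h => Set.infinite_of_forall_exists_gt fun N => (h N).imp fun _ hx => ⟨hx.2, hx.1⟩⟩

/-- On `P_∞` a post can be recognised on the doubly principal restrictions alone, since these
occur arbitrarily far out (two steps above every post). -/
lemma Pinf_eq_setOf :
    Pinf = {D | ∀ N, ∃ x, N < x ∧ ∀ N', ∃ m,
      DoublyPrincipal (D.restrict m) ∧ N' < m ∧ (D.restrict m).IsPost x} := by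
  ext D
  rw [mem_Pinf_iff_exists_isPost]
  constructor
  · intro h N
    obtain ⟨x, hNx, hx⟩ := h N
    refine ⟨x, hNx, fun N' => ?_⟩
    obtain ⟨p, hp_gt, hp⟩ := h (max N' x)
    refine ⟨p + 2, hp.doublyPrincipal_restrict, by omega, by omega, fun y hy hyx => ?_⟩
    simp only [Causet.restrict_rel]
    rcases hx y hyx with h' | h'
    · exact Or.inl ⟨hy, by omega, h'⟩
    · exact Or.inr ⟨by omega, hy, h'⟩
  · intro h N
    obtain ⟨x, hNx, hx⟩ := h N
    refine ⟨x, hNx, fun y hyx => ?_⟩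
    obtain ⟨m, -, hym, hxm⟩ := hx y
    exact (hxm.2 y hym hyx).imp (·.2.2) (·.2.2)

lemma measurable_doublyPrincipal_restrict_and {m : ℕ} (Q : FinCauset m → Prop) :
    Measurable[doublyPrincipalCylAlgebra]
      fun D : Causet => DoublyPrincipal (D.restrict m) ∧ Q (D.restrict m) := by
  have hset : {D : Causet | DoublyPrincipal (D.restrict m) ∧ Q (D.restrict m)} =
      ⋃ (C : FinCauset m) (_ : DoublyPrincipal C ∧ Q C), cyl C := by
    ext D
    simp [mem_cyl_iff_restrict_eq]
  let := doublyPrincipalCylAlgebra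
  refine measurableSet_setOfPred.1 ?_
  rw [hset]
  exact .iUnion fun C => .iUnion fun hC => measurableSet_generateFrom ⟨m, C, hC.1, rfl⟩

lemma measurableSet_Pinf : MeasurableSet[doublyPrincipalCylAlgebra] Pinf := by
  let := doublyPrincipalCylAlgebra
  rw [Pinf_eq_setOf]
  exact measurableSet_setOfPred.2 <| .forall fun N => .exists fun x => measurable_const.and <|
    .forall fun N' => .exists fun m =>
      measurable_doublyPrincipal_restrict_and fun C => N' < m ∧ C.IsPost x

lemma mem_cyl_iff_of_mem_Pinf {n : ℕ} {C : FinCauset n} {D : Causet} (hD : D ∈ Pinf) :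
    D ∈ cyl C ↔ ∃ m, DoublyPrincipal (D.restrict m) ∧ n ≤ m ∧ RestrEq (D.restrict m) C := by
  refine ⟨fun h => ?_, fun ⟨m, _, hnm, hC⟩ => (mem_cyl_iff_restrEq_restrict hnm).2 hC⟩
  obtain ⟨p, hp_gt, hp⟩ := mem_Pinf_iff_exists_isPost.1 hD n
  exact ⟨p + 2, hp.doublyPrincipal_restrict, by omega,
    (mem_cyl_iff_restrEq_restrict (by omega)).1 h⟩

lemma comap_cylAlgebra_le :
    cylAlgebra.comap (Subtype.val : Pinf → Causet) ≤
      doublyPrincipalCylAlgebra.comap Subtype.val := by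
  let := doublyPrincipalCylAlgebra
  rw [cylAlgebra, MeasurableSpace.comap_generateFrom]
  refine MeasurableSpace.generateFrom_le ?_
  rintro _ ⟨_, ⟨n, -, C, rfl⟩, rfl⟩
  refine ⟨_, measurableSet_setOfPred.2 <| .exists fun m =>
    measurable_doublyPrincipal_restrict_and fun C' : FinCauset m => n ≤ m ∧ RestrEq C' C, ?_⟩
  ext ⟨D, hD⟩
  exact (mem_cyl_iff_of_mem_Pinf hD).symm

lemma measurableSet_of_subset_Pinf {E : Set Causet} (hE : MeasurableSet[cylAlgebra] E)
    (hsub : E ⊆ Pinf) : MeasurableSet[doublyPrincipalCylAlgebra] E := by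
  let := doublyPrincipalCylAlgebra
  have h := MeasurableSet.subtype_image measurableSet_Pinf
    (comap_cylAlgebra_le _ ⟨E, hE, rfl⟩ : MeasurableSet[_] (Subtype.val ⁻¹' E : Set Pinf))
  rwa [Subtype.image_preimage_coe, inter_eq_right.2 hsub] at h

lemma measurableSet_of_compl_Pinf_subset {E : Set Causet} (hE : MeasurableSet[cylAlgebra] E)
    (h : Pinfᶜ ⊆ E ∨ Pinfᶜ ⊆ Eᶜ) : MeasurableSet[doublyPrincipalCylAlgebra] E := by
  rcases h with h | h
  · exact (measurableSet_of_subset_Pinf hE.compl (compl_subset_comm.1 h)).of_compl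
  · exact measurableSet_of_subset_Pinf hE (compl_subset_compl.1 h)

lemma mem_iff_mem_of_restrict_eq {E : Set Causet}
    (hE : MeasurableSet[doublyPrincipalCylAlgebra] E) {X Y : Causet}
    (h : ∀ n, DoublyPrincipal (X.restrict n) ∨ DoublyPrincipal (Y.restrict n) →
      X.restrict n = Y.restrict n) :
    X ∈ E ↔ Y ∈ E := by
  refine forall_generateFrom_mem_iff_mem_iff.2 ?_ E hE
  rintro _ ⟨n, C, hC, rfl⟩
  simp only [mem_cyl_iff_restrict_eq]
  constructor
  · rintro rfl
    exact (h n (Or.inl hC)).symm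
  · rintro rfl
    exact h n (Or.inr hC)

lemma Iso.symm {C D : Causet} (h : Iso C D) : Iso D C := by
  obtain ⟨f, hf⟩ := h
  exact ⟨f.symm, fun x y => by simpa using (hf (f.symm x) (f.symm y)).symm⟩

lemma CovariantEvent.mem_iff {E : Set Causet} (hE : CovariantEvent E) {C D : Causet}
    (h : Iso C D) : C ∈ E ↔ D ∈ E :=
  ⟨hE C D h, hE D C h.symm⟩

namespace FinCauset

variable {n : ℕ}

lemma not_doublyPrincipal_restrict_toCauset (C : FinCauset n) {m : ℕ} (hm : n < m) :
    ¬ DoublyPrincipal (C.toCauset.restrict m) := by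
  rw [Causet.doublyPrincipal_restrict_iff]
  rintro ⟨k, rfl, htop, -⟩
  have := C.bounded _ _ (htop 0 k.succ_pos)
  omega

lemma not_doublyPrincipal_restrict_shiftCauset (C : FinCauset n) (m : ℕ) :
    ¬ DoublyPrincipal (C.shiftCauset.restrict m) := by
  rw [Causet.doublyPrincipal_restrict_iff]
  rintro ⟨k, -, htop, -⟩
  exact (htop 0 k.succ_pos).1.false

/-- The cycle `0 ↦ 1 ↦ ⋯ ↦ n ↦ 0` moves the isolated element `n` of `C.toCauset` to `0`. -/
lemma iso_toCauset_shiftCauset (C : FinCauset n) : Iso C.toCauset C.shiftCauset := by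
  refine ⟨⟨fun x => if x < n then x + 1 else if x = n then 0 else x,
    fun y => if y = 0 then n else if y ≤ n then y - 1 else y,
    fun x => by dsimp only; grind,
    fun y => by dsimp only; grind⟩, fun x y => ?_⟩
  simp only [toCauset, shiftCauset, Equiv.coe_fn_mk]
  by_cases hxy : x < n ∧ y < n
  · simp [hxy.1, hxy.2]
  · refine iff_of_false (fun h => hxy (C.bounded x y h)) fun ⟨hpos, h⟩ => ?_
    have hb := C.bounded _ _ h
    have hlt := C.lt_of_rel _ _ h
    split_ifs at hpos hb hlt <;> omega

end FinCauset

lemma Causet.restrict_toCauset_restrict (X : Causet) {n M : ℕ} (h : n ≤ M) :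
    (X.restrict M).toCauset.restrict n = X.restrict n :=
  FinCauset.ext fun x y hx hy => by
    simp [FinCauset.toCauset, hx, hy, show x < M by omega, show y < M by omega]

lemma mem_iff_mem_shiftCauset_restrict {E : Set Causet}
    (hE : MeasurableSet[doublyPrincipalCylAlgebra] E) (hcov : CovariantEvent E) {X : Causet}
    {M : ℕ} (hX : ∀ n > M, ¬ DoublyPrincipal (X.restrict n)) :
    X ∈ E ↔ (X.restrict M).shiftCauset ∈ E := by
  refine (mem_iff_mem_of_restrict_eq hE fun n hn => ?_).trans
    (hcov.mem_iff (X.restrict M).iso_toCauset_shiftCauset)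
  rcases le_or_gt n M with h | h
  · exact (X.restrict_toCauset_restrict h).symm
  · exact (hn.elim (hX n h) ((X.restrict M).not_doublyPrincipal_restrict_toCauset h)).elim

namespace Causet

variable (U : Causet)

/-- Elements that can be added to the finite down-set `s` keeping it a down-set. -/
def addable (s : Finset ℕ) : Set ℕ :=
  {u | u ∉ s ∧ ∀ y, U.rel y u → y ∈ s}

def addableNonTop (s : Finset ℕ) : Set ℕ :=
  {u | u ∈ U.addable s ∧ ∃ y ∈ s, ¬ U.rel y u}

noncomputable def greedyNext (s : Finset ℕ) : ℕ := by
  classical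
  exact if (U.addableNonTop s).Nonempty then sInf (U.addableNonTop s) else sInf (U.addable s)

noncomputable def greedyPrefix : ℕ → Finset ℕ
  | 0 => ∅
  | k + 1 => insert (U.greedyNext (greedyPrefix k)) (greedyPrefix k)

noncomputable def greedyEnum (k : ℕ) : ℕ :=
  U.greedyNext (U.greedyPrefix k)

variable {U}

lemma mem_greedyPrefix {x k : ℕ} : x ∈ U.greedyPrefix k ↔ ∃ j < k, U.greedyEnum j = x := by
  induction k with
  | zero => simp [greedyPrefix]
  | succ k ih =>
    simp only [greedyPrefix, Finset.mem_insert, ih]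
    constructor
    · rintro (rfl | ⟨j, hj, rfl⟩)
      exacts [⟨k, k.lt_succ_self, rfl⟩, ⟨j, by omega, rfl⟩]
    · rintro ⟨j, hj, rfl⟩
      rcases Nat.lt_succ_iff_lt_or_eq.1 hj with hj | rfl
      exacts [Or.inr ⟨j, hj, rfl⟩, Or.inl rfl]

lemma greedyEnum_mem_greedyPrefix {j k : ℕ} (h : j < k) : U.greedyEnum j ∈ U.greedyPrefix k :=
  mem_greedyPrefix.2 ⟨j, h, rfl⟩

lemma addable_nonempty (s : Finset ℕ) : (U.addable s).Nonempty := by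
  classical
  have hex : ∃ x, x ∉ s := Infinite.exists_notMem_finset s
  exact ⟨Nat.find hex, Nat.find_spec hex, fun y hy => by_contra fun hys =>
    Nat.find_min hex (U.lt_of_rel _ _ hy) hys⟩

lemma greedyNext_mem_addable (s : Finset ℕ) : U.greedyNext s ∈ U.addable s := by
  unfold greedyNext
  split_ifs with h
  exacts [(Nat.sInf_mem h).1, Nat.sInf_mem (addable_nonempty s)]

lemma greedyNext_mem_addableNonTop {s : Finset ℕ} (h : (U.addableNonTop s).Nonempty) :
    U.greedyNext s ∈ U.addableNonTop s := by
  unfold greedyNext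
  rw [if_pos h]
  exact Nat.sInf_mem h

lemma greedyNext_le {s : Finset ℕ} {x : ℕ} (hx : x ∈ U.addableNonTop s) : U.greedyNext s ≤ x := by
  unfold greedyNext
  rw [if_pos ⟨x, hx⟩]
  exact Nat.sInf_le hx

lemma greedyEnum_notMem_greedyPrefix (k : ℕ) : U.greedyEnum k ∉ U.greedyPrefix k :=
  (greedyNext_mem_addable _).1

lemma greedyEnum_injective : Function.Injective U.greedyEnum := by
  intro a b hab
  by_contra hne
  rcases Nat.lt_or_gt_of_ne hne with h | h
  · exact greedyEnum_notMem_greedyPrefix b (hab ▸ greedyEnum_mem_greedyPrefix h)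
  · exact greedyEnum_notMem_greedyPrefix a (hab ▸ greedyEnum_mem_greedyPrefix h)

lemma lt_of_rel_greedyEnum {a b : ℕ} (h : U.rel (U.greedyEnum a) (U.greedyEnum b)) : a < b := by
  obtain ⟨j, hj, hja⟩ := mem_greedyPrefix.1 ((greedyNext_mem_addable _).2 _ h)
  exact greedyEnum_injective hja ▸ hj

/-- If everything below `x` is enumerated before step `K` but `x` never is, then at step `K + 1`
the element `x` is addable and not above `U.greedyEnum K`, so it would be chosen at the latest
then. -/
lemma greedyEnum_surjective : Function.Surjective U.greedyEnum := by
  intro x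
  induction x using Nat.strong_induction_on with
  | _ x ih =>
  choose! j hj using ih
  obtain ⟨K, hK⟩ : ∃ K, ∀ y < x, ∃ i < K, U.greedyEnum i = y :=
    ⟨(Finset.range x).sup (j · + 1), fun y hy =>
      ⟨j y, Finset.le_sup (f := (j · + 1)) (Finset.mem_range.2 hy), hj y hy⟩⟩
  by_contra! hx
  have hKx : ¬ U.rel (U.greedyEnum K) x := fun h =>
    greedyEnum_notMem_greedyPrefix K (mem_greedyPrefix.2 (hK _ (U.lt_of_rel _ _ h)))
  have hx_add : x ∈ U.addableNonTop (U.greedyPrefix (K + 1)) := by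
    refine ⟨⟨fun h => ?_, fun y hy => ?_⟩, _, greedyEnum_mem_greedyPrefix K.lt_succ_self, hKx⟩
    · obtain ⟨i, -, hi⟩ := mem_greedyPrefix.1 h
      exact hx i hi
    · obtain ⟨i, hi, rfl⟩ := hK y (U.lt_of_rel _ _ hy)
      exact greedyEnum_mem_greedyPrefix (by omega)
  obtain ⟨i, hi, heq⟩ := hK _ (lt_of_le_of_ne (greedyNext_le hx_add) (hx (K + 1)))
  exact greedyEnum_notMem_greedyPrefix (K + 1) (heq ▸ greedyEnum_mem_greedyPrefix (by omega))

variable (U)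

def greedyRelabel : Causet where
  rel a b := U.rel (U.greedyEnum a) (U.greedyEnum b)
  irrefl _ h := U.irrefl _ h
  trans _ _ _ h h' := U.trans _ _ _ h h'
  lt_of_rel _ _ h := lt_of_rel_greedyEnum h

lemma iso_greedyRelabel : Iso U.greedyRelabel U :=
  ⟨Equiv.ofBijective _ ⟨greedyEnum_injective, greedyEnum_surjective⟩, fun _ _ => Iff.rfl⟩

variable {U}

/-- `U.greedyEnum k` is above all earlier labels but is not a post, so something is incomparable
to it; the least unlabelled element not above `U.greedyEnum k` is then addable at step `k + 1`,
and the greedy choice there is not a top. -/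
lemma not_isTopLabel_succ_greedyRelabel {k : ℕ} (hk : ¬ IsPost U (U.greedyEnum k))
    (htop : U.greedyRelabel.IsTopLabel k) : ¬ U.greedyRelabel.IsTopLabel (k + 1) := by
  classical
  obtain ⟨z, hzk, hz₁, hz₂⟩ : ∃ z, z ≠ U.greedyEnum k ∧ ¬ U.rel z (U.greedyEnum k) ∧
      ¬ U.rel (U.greedyEnum k) z := by
    simpa [IsPost] using hk
  have hex : ∃ u, u ∉ U.greedyPrefix (k + 1) ∧ ¬ U.rel (U.greedyEnum k) u := by
    refine ⟨z, fun hz => ?_, hz₂⟩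
    obtain ⟨j, hj, rfl⟩ := mem_greedyPrefix.1 hz
    rcases Nat.lt_succ_iff_lt_or_eq.1 hj with hj | rfl
    exacts [hz₁ (htop j hj), hzk rfl]
  have hu : Nat.find hex ∈ U.addableNonTop (U.greedyPrefix (k + 1)) := by
    refine ⟨⟨(Nat.find_spec hex).1, fun y hy => by_contra fun hys => ?_⟩,
      _, greedyEnum_mem_greedyPrefix k.lt_succ_self, (Nat.find_spec hex).2⟩
    exact Nat.find_min hex (U.lt_of_rel _ _ hy)
      ⟨hys, fun h => (Nat.find_spec hex).2 (U.trans _ _ _ h hy)⟩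
  obtain ⟨-, y, hy, hy_not⟩ := greedyNext_mem_addableNonTop ⟨_, hu⟩
  obtain ⟨j, hj, rfl⟩ := mem_greedyPrefix.1 hy
  exact fun h => hy_not (h j hj)

lemma exists_forall_not_doublyPrincipal_restrict_greedyRelabel
    (hfin : {x | IsPost U x}.Finite) :
    ∃ M, ∀ n > M, ¬ DoublyPrincipal (U.greedyRelabel.restrict n) := by
  obtain ⟨K, hK⟩ := (hfin.preimage greedyEnum_injective.injOn).bddAbove
  refine ⟨K + 2, fun n hn hdp => ?_⟩
  obtain ⟨k, rfl, htop_succ, htop⟩ := (doublyPrincipal_restrict_iff _ _).1 hdp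
  have hk : ¬ IsPost U (U.greedyEnum k) := fun hp => by have := hK hp; omega
  exact not_isTopLabel_succ_greedyRelabel hk htop htop_succ

end Causet

lemma mem_iff_mem_of_not_mem_Pinf {E : Set Causet}
    (hE : MeasurableSet[doublyPrincipalCylAlgebra] E) (hcov : CovariantEvent E) {X Y : Causet}
    (hX : X ∉ Pinf) (hY : Y ∉ Pinf) : X ∈ E ↔ Y ∈ E := by
  obtain ⟨M, hM⟩ := Causet.exists_forall_not_doublyPrincipal_restrict_greedyRelabel
    (Set.not_infinite.1 hX)
  obtain ⟨N, hN⟩ := Causet.exists_forall_not_doublyPrincipal_restrict_greedyRelabel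
    (Set.not_infinite.1 hY)
  calc X ∈ E ↔ X.greedyRelabel ∈ E := (hcov.mem_iff X.iso_greedyRelabel).symm
    _ ↔ (X.greedyRelabel.restrict M).shiftCauset ∈ E := mem_iff_mem_shiftCauset_restrict hE hcov hM
    _ ↔ (Y.greedyRelabel.restrict N).shiftCauset ∈ E :=
      mem_iff_mem_of_restrict_eq hE fun n hn => (hn.elim
        (FinCauset.not_doublyPrincipal_restrict_shiftCauset _ n)
        (FinCauset.not_doublyPrincipal_restrict_shiftCauset _ n)).elim
    _ ↔ Y.greedyRelabel ∈ E := (mem_iff_mem_shiftCauset_restrict hE hcov hN).symm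
    _ ↔ Y ∈ E := hcov.mem_iff Y.iso_greedyRelabel

lemma compl_Pinf_subset_or_subset_compl {E : Set Causet}
    (hE : MeasurableSet[doublyPrincipalCylAlgebra] E) (hcov : CovariantEvent E) :
    Pinfᶜ ⊆ E ∨ Pinfᶜ ⊆ Eᶜ := by
  by_cases h : ∃ X ∈ Pinfᶜ, X ∈ E
  · obtain ⟨X, hX, hXE⟩ := h
    exact Or.inl fun Y hY => (mem_iff_mem_of_not_mem_Pinf hE hcov hX hY).1 hXE
  · exact Or.inr fun Y hY hYE => h ⟨Y, hY, hYE⟩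

/-- R_p = 𝔐_p ∩ R. -/
theorem stmt_16 (E : Set Causet) (hE : MemR E) :
    (Pinfᶜ ⊆ E ∨ Pinfᶜ ⊆ Eᶜ) ↔ MeasurableSet[doublyPrincipalCylAlgebra] E :=
  ⟨measurableSet_of_compl_Pinf_subset hE.1, fun h => compl_Pinf_subset_or_subset_compl h hE.2⟩
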